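/- arXiv:2009.01699 — 4 statements merged into one kernel-verified Lean document; each statement's English description precedes it below -/
import Mathlib

section
/- Let A be a random n×n real matrix with columns X_1, …, X_n, and for each k let H_k denote the span of all columns except the k-th. Then for every δ, ρ ∈ (0,1) and every ε ≥ 0, P[inf_{x ∈ Incomp_n(δ,ρ)} ‖Ax‖₂ ≤ ερ n^{−1/2}] ≤ (1/(δn)) · Σ_{k=1}^{n} P[dist(X_k, H_k) ≤ ε]. -/
open MeasureTheory ProbabilityTheory Matrix
open scoped ENNReal

noncomputable section

/-- The Euclidean norm of a finite real vector. -/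
def euclNorm {m : ℕ} (v : Fin m → ℝ) : ℝ := Real.sqrt (∑ i, v i ^ 2)

/-- A vector of `Fin m → ℝ` regarded as an element of Euclidean space. -/
def toE {m : ℕ} (v : Fin m → ℝ) : EuclideanSpace ℝ (Fin m) :=
  (WithLp.equiv 2 (Fin m → ℝ)).symm v

/-- The smallest singular value of a square matrix:
`s_n(A) = inf_{‖x‖₂ = 1} ‖Ax‖₂`. -/
def smin {n : ℕ} (A : Matrix (Fin n) (Fin n) ℝ) : ℝ :=
  sInf {r | ∃ x : Fin n → ℝ, euclNorm x = 1 ∧ r = euclNorm (A.mulVec x)}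

/-- The singular values of an m×n matrix (m ≤ n intended): the square roots of the
eigenvalues of `A * Aᵀ`. -/
def svals {m n : ℕ} (A : Matrix (Fin m) (Fin n) ℝ) : Fin m → ℝ :=
  fun i => Real.sqrt ((Matrix.isHermitian_mul_conjTranspose_self A).eigenvalues i)

/-- The `K`-rank of an m×n matrix: the number of its singular values of size at least `K√n`. -/
def kRank {m n : ℕ} (K : ℝ) (A : Matrix (Fin m) (Fin n) ℝ) : ℕ :=
  (Finset.univ.filter (fun i => K * Real.sqrt n ≤ svals A i)).card

/-- The operator (spectral) norm of a matrix, via Euclidean spaces. -/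
def specNorm {m n : ℕ} (A : Matrix (Fin m) (Fin n) ℝ) : ℝ :=
  ‖LinearMap.toContinuousLinearMap (Matrix.toEuclideanLin A)‖

/-- The Hilbert–Schmidt (Frobenius) norm of a matrix. -/
def frobNorm {m n : ℕ} (A : Matrix (Fin m) (Fin n) ℝ) : ℝ :=
  Real.sqrt (∑ i, ∑ j, A i j ^ 2)

/-- The least common denominator `LCD_{α,γ}(v)`. -/
def LCD {N : ℕ} (α γ : ℝ) (v : Fin N → ℝ) : ℝ :=
  sInf {θ : ℝ | 0 < θ ∧ ∃ p : Fin N → ℤ,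
    euclNorm (θ • v - fun i => (p i : ℝ)) < min (γ * euclNorm (θ • v)) α}

/-- A vector is `δ`-sparse if it has at most `δN` nonzero coordinates. -/
def IsSparse {N : ℕ} (δ : ℝ) (x : Fin N → ℝ) : Prop :=
  ((Finset.univ.filter (fun i => x i ≠ 0)).card : ℝ) ≤ δ * N

/-- Compressible unit vectors: within distance `ρ` of a `δ`-sparse vector. -/
def Comp {N : ℕ} (δ ρ : ℝ) (x : Fin N → ℝ) : Prop :=
  euclNorm x = 1 ∧ ∃ y : Fin N → ℝ, IsSparse δ y ∧ euclNorm (x - y) ≤ ρ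

/-- Incompressible unit vectors. -/
def Incomp {N : ℕ} (δ ρ : ℝ) (x : Fin N → ℝ) : Prop :=
  euclNorm x = 1 ∧ ¬ Comp δ ρ x

/-- A real random variable is lazy Rademacher if it takes the value 0 with probability 1/2
and the values 1 and -1 with probability 1/4 each. -/
def IsLazyRademacher {Ω : Type*} [MeasurableSpace Ω] (μ : Measure Ω) (X : Ω → ℝ) : Prop :=
  Measurable X ∧ μ {ω | X ω = 0} = 1/2 ∧ μ {ω | X ω = 1} = 1/4 ∧ μ {ω | X ω = -1} = 1/4

/-- `X` has sub-Gaussian norm at most `s`, i.e. `E[exp(X²/s²)] ≤ 2`. -/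
def HasSubgaussianNormLE {Ω : Type*} [MeasurableSpace Ω] (μ : Measure Ω) (X : Ω → ℝ)
    (s : ℝ) : Prop :=
  Integrable (fun ω => Real.exp (X ω ^ 2 / s ^ 2)) μ ∧
    (∫ ω, Real.exp (X ω ^ 2 / s ^ 2) ∂μ) ≤ 2

/-- The entries of the random matrix `M` are i.i.d. copies of `ξ`. -/
def IIDEntries {Ω : Type*} [MeasurableSpace Ω] (μ : Measure Ω) {m n : ℕ}
    (M : Ω → Matrix (Fin m) (Fin n) ℝ) (ξ : Ω → ℝ) : Prop :=
  iIndepFun (fun (p : Fin m × Fin n) ω => M ω p.1 p.2) μ ∧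
    ∀ i j, IdentDistrib (fun ω => M ω i j) ξ μ μ

/-- The (n−1)×n matrix consisting of the first n−1 rows of an n×n matrix. -/
def firstRows {n : ℕ} (A : Matrix (Fin n) (Fin n) ℝ) : Matrix (Fin (n-1)) (Fin n) ℝ :=
  Matrix.submatrix A (Fin.castLE (Nat.sub_le n 1)) id

end

/-- The Borel/pi measurable structure on matrices (entrywise). -/
noncomputable instance matrixMeasurableSpace {m n α : Type*} [MeasurableSpace α] :
    MeasurableSpace (Matrix m n α) :=
  inferInstanceAs (MeasurableSpace (m → n → α))

/-!
If `‖Ax‖ ≤ ερ/√n` for some incompressible `x`, then `x` has more than `δn` coordinates with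
`|x_k| > ρ/√n` (otherwise dropping the small coordinates leaves a sparse vector within `ρ`),
and every `k` satisfies `|x_k| · dist(X_k, H_k) ≤ ‖Ax‖`. Hence more than `δn` columns are
`ε`-close to the span of the others, and Markov's inequality for the number of such columns
gives the bound.
-/

open Finset

theorem meas_le_card_mem_le {α ι : Type*} [MeasurableSpace α] [Fintype ι] (μ : Measure α)
    (s : ι → Set α) [∀ ω, DecidablePred fun k => ω ∈ s k] {t : ℝ} (ht : 0 < t) :
    μ {ω | t ≤ #{k | ω ∈ s k}} ≤ ENNReal.ofReal (1 / t) * ∑ k, μ (s k) := by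
  classical
  set f : α → ℝ≥0∞ := fun ω => ∑ k, (toMeasurable μ (s k)).indicator 1 ω
  have hf : Measurable f :=
    Finset.measurable_sum _ fun k _ => measurable_one.indicator (measurableSet_toMeasurable μ _)
  have hcount : {ω | t ≤ #{k | ω ∈ s k}} ⊆ {ω | ENNReal.ofReal t ≤ f ω} := by
    intro ω hω
    have hle : #{k | ω ∈ s k} ≤ #{k | ω ∈ toMeasurable μ (s k)} :=
      card_le_card fun k hk => by
        simp only [mem_filter, mem_univ, true_and] at hk ⊢
        exact subset_toMeasurable μ _ hk
    have hfω : f ω = #{k | ω ∈ toMeasurable μ (s k)} := by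
      simp [f, Set.indicator_apply, Finset.sum_boole]
    rw [Set.mem_ofPred_eq, hfω, ← ENNReal.ofReal_natCast]
    exact ENNReal.ofReal_le_ofReal (hω.trans (by exact_mod_cast hle))
  have hint : ∫⁻ ω, f ω ∂μ = ∑ k, μ (s k) := by
    rw [lintegral_finsetSum _ fun k _ =>
      measurable_one.indicator (measurableSet_toMeasurable μ _)]
    simp [lintegral_indicator_one (measurableSet_toMeasurable μ _), measure_toMeasurable]
  calc μ {ω | t ≤ #{k | ω ∈ s k}} ≤ μ {ω | ENNReal.ofReal t ≤ f ω} := measure_mono hcount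
    _ ≤ (∫⁻ ω, f ω ∂μ) / ENNReal.ofReal t :=
      meas_ge_le_lintegral_div hf.aemeasurable (by simpa using ht) ENNReal.ofReal_ne_top
    _ = ENNReal.ofReal (1 / t) * ∑ k, μ (s k) := by
      rw [hint, one_div, ENNReal.ofReal_inv_of_pos ht, ENNReal.div_eq_inv_mul]

theorem abs_mul_infDist_span_le_norm_sum {ι E : Type*} [Fintype ι] [NormedAddCommGroup E]
    [NormedSpace ℝ E] (v : ι → E) (x : ι → ℝ) (k : ι) :
    |x k| * Metric.infDist (v k) (Submodule.span ℝ {y | ∃ j, j ≠ k ∧ y = v j} : Set E) ≤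
      ‖∑ j, x j • v j‖ := by
  classical
  rcases eq_or_ne (x k) 0 with hk | hk
  · simp [hk]
  set w := ∑ j ∈ univ.erase k, x j • v j
  have hw : -(x k)⁻¹ • w ∈ Submodule.span ℝ {y | ∃ j, j ≠ k ∧ y = v j} :=
    Submodule.smul_mem _ _ <| Submodule.sum_mem _ fun j hj =>
      Submodule.smul_mem _ _ (Submodule.subset_span ⟨j, ne_of_mem_erase hj, rfl⟩)
  have hsum : ∑ j, x j • v j = x k • (v k - -(x k)⁻¹ • w) := by
    rw [← add_sum_erase _ _ (mem_univ k), neg_smul, sub_neg_eq_add, smul_add, smul_inv_smul₀ hk]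
  calc |x k| * Metric.infDist (v k) _ ≤ |x k| * dist (v k) (-(x k)⁻¹ • w) := by
        gcongr
        exact Metric.infDist_le_dist_of_mem hw
    _ = ‖∑ j, x j • v j‖ := by rw [hsum, norm_smul, dist_eq_norm, Real.norm_eq_abs]

theorem euclNorm_eq_norm_toE {m : ℕ} (v : Fin m → ℝ) : euclNorm v = ‖toE v‖ := by
  simp [euclNorm, toE, EuclideanSpace.norm_eq, sq_abs]

theorem toE_mulVec {m n : ℕ} (A : Matrix (Fin m) (Fin n) ℝ) (x : Fin n → ℝ) :
    toE (A *ᵥ x) = ∑ j, x j • toE fun i => A i j := by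
  ext i
  simp [toE, mulVec, dotProduct, mul_comm]

theorem pos_of_euclNorm_eq_one {N : ℕ} {x : Fin N → ℝ} (hx : euclNorm x = 1) : 0 < N := by
  rcases N with _ | N
  · simp [euclNorm] at hx
  · exact N.succ_pos

theorem euclNorm_le_of_abs_le {N : ℕ} {v : Fin N → ℝ} {c : ℝ} (hc : 0 ≤ c)
    (hv : ∀ k, |v k| ≤ c) : euclNorm v ≤ Real.sqrt N * c := by
  calc euclNorm v ≤ Real.sqrt (∑ _k : Fin N, c ^ 2) :=
        Real.sqrt_le_sqrt <| sum_le_sum fun k _ => by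
          rw [← sq_abs]
          exact pow_le_pow_left₀ (abs_nonneg _) (hv k) 2
    _ = Real.sqrt N * c := by
      rw [sum_const, card_univ, Fintype.card_fin, nsmul_eq_mul,
        Real.sqrt_mul (Nat.cast_nonneg N), Real.sqrt_sq hc]

theorem Incomp.exists_lt_abs_of_card_le {N : ℕ} {δ ρ : ℝ} {x : Fin N → ℝ}
    (hx : Incomp δ ρ x) (hρ : 0 ≤ ρ) {s : Finset (Fin N)} (hs : (#s : ℝ) ≤ δ * N) :
    ∃ k ∉ s, ρ / Real.sqrt N < |x k| := by
  by_contra! hsmall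
  have hN : (0 : ℝ) < Real.sqrt N :=
    Real.sqrt_pos.2 (by exact_mod_cast pos_of_euclNorm_eq_one hx.1)
  refine hx.2 ⟨hx.1, fun k => if k ∈ s then x k else 0, ?_, ?_⟩
  · refine le_trans ?_ hs
    exact_mod_cast card_le_card fun k hk => by
      by_contra hks
      simp only [mem_filter, mem_univ, true_and, hks, if_false, not_true_eq_false] at hk
  · calc euclNorm (x - fun k => if k ∈ s then x k else 0)
        ≤ Real.sqrt N * (ρ / Real.sqrt N) := by
          refine euclNorm_le_of_abs_le (by positivity) fun k => ?_
          by_cases hk : k ∈ s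
          · simp [hk]
            positivity
          · simpa [hk] using hsmall k hk
      _ = ρ := mul_div_cancel₀ ρ hN.ne'

/-- The paper's `dist(X_k, H_k)`. -/
noncomputable def colDist {m n : ℕ} (A : Matrix (Fin m) (Fin n) ℝ) (k : Fin n) : ℝ :=
  Metric.infDist (toE fun i => A i k)
    (Submodule.span ℝ {y : EuclideanSpace ℝ (Fin m) | ∃ j, j ≠ k ∧ y = toE fun i => A i j})

theorem abs_mul_colDist_le {m n : ℕ} (A : Matrix (Fin m) (Fin n) ℝ) (x : Fin n → ℝ)
    (k : Fin n) : |x k| * colDist A k ≤ euclNorm (A *ᵥ x) := by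
  rw [euclNorm_eq_norm_toE, toE_mulVec]
  exact abs_mul_infDist_span_le_norm_sum _ x k

theorem lt_card_colDist_le_of_iInf_le {m n : ℕ} (A : Matrix (Fin m) (Fin n) ℝ) {δ ρ ε : ℝ}
    (hρ : 0 < ρ) (hε : 0 ≤ ε)
    (h : ⨅ x : {x : Fin n → ℝ // Incomp δ ρ x}, ENNReal.ofReal (euclNorm (A *ᵥ x)) ≤
      ENNReal.ofReal (ε * ρ / Real.sqrt n)) :
    δ * n < #{k | colDist A k ≤ ε} := by
  by_contra! hS
  set S : Finset (Fin n) := {k | colDist A k ≤ ε}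
  obtain ⟨x₀⟩ : Nonempty {x : Fin n → ℝ // Incomp δ ρ x} := by
    by_contra hempty
    rw [not_nonempty_iff] at hempty
    rw [iInf_of_empty] at h
    exact ENNReal.ofReal_ne_top (top_le_iff.1 h)
  set c := ρ / Real.sqrt n
  have hc : 0 < c :=
    div_pos hρ (Real.sqrt_pos.2 (by exact_mod_cast pos_of_euclNorm_eq_one x₀.2.1))
  have hSc : Sᶜ.Nonempty := by
    obtain ⟨k, hk, -⟩ := x₀.2.exists_lt_abs_of_card_le hρ.le hS
    exact ⟨k, mem_compl.2 hk⟩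
  -- The infimum need not be attained, so a uniform lower bound `c * d` with `d > ε` is needed.
  set d := Sᶜ.inf' hSc (colDist A)
  have hεd : ε < d := (lt_inf'_iff _).2 fun k hk => by simpa [S] using hk
  have hlow : ∀ x : {x : Fin n → ℝ // Incomp δ ρ x}, c * d ≤ euclNorm (A *ᵥ x) := by
    rintro ⟨x, hx⟩
    obtain ⟨k, hkS, hk⟩ := hx.exists_lt_abs_of_card_le hρ.le hS
    calc c * d ≤ |x k| * colDist A k :=
          mul_le_mul hk.le (inf'_le _ (mem_compl.2 hkS)) (hε.trans hεd.le) (abs_nonneg _)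
      _ ≤ euclNorm (A *ᵥ x) := abs_mul_colDist_le A x k
  have hcd : c * d ≤ ε * ρ / Real.sqrt n :=
    (ENNReal.ofReal_le_ofReal_iff (by positivity)).1
      ((le_iInf fun x => ENNReal.ofReal_le_ofReal (hlow x)).trans h)
  have hcε : c * ε < c * d := mul_lt_mul_of_pos_left hεd hc
  have : ε * ρ / Real.sqrt n = c * ε := by ring
  linarith

theorem invertibility_via_distance_general {n : ℕ} {Ω : Type*} [MeasurableSpace Ω]
    (μ : Measure Ω)
    (A : Ω → Matrix (Fin n) (Fin n) ℝ)
    (δ ρ : ℝ) (hδ : δ ∈ Set.Ioo (0:ℝ) 1) (hρ : ρ ∈ Set.Ioo (0:ℝ) 1)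
    (ε : ℝ) (hε : 0 ≤ ε) :
    μ {ω | ⨅ x : {x : Fin n → ℝ // Incomp δ ρ x},
            ENNReal.ofReal (euclNorm ((A ω).mulVec x)) ≤
          ENNReal.ofReal (ε * ρ / Real.sqrt n)} ≤
      ENNReal.ofReal (1 / (δ * n)) *
        ∑ k : Fin n, μ {ω | Metric.infDist (toE (fun i => A ω i k))
          (Submodule.span ℝ {y : EuclideanSpace ℝ (Fin n) |
            ∃ j : Fin n, j ≠ k ∧ y = toE (fun i => A ω i j)} : Set (EuclideanSpace ℝ (Fin n)))
          ≤ ε} := by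
  have hevent : {ω | ⨅ x : {x : Fin n → ℝ // Incomp δ ρ x},
      ENNReal.ofReal (euclNorm ((A ω).mulVec x)) ≤ ENNReal.ofReal (ε * ρ / Real.sqrt n)} ⊆
      {ω | δ * n < #{k | colDist (A ω) k ≤ ε}} :=
    fun ω hω => lt_card_colDist_le_of_iInf_le (A ω) hρ.1 hε hω
  rcases n.eq_zero_or_pos with rfl | hn
  · simpa using measure_mono_null hevent (by simp)
  calc _ ≤ μ {ω | δ * n ≤ #{k | colDist (A ω) k ≤ ε}} :=
        measure_mono fun ω hω => (show δ * n < _ from hevent hω).le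
    _ ≤ _ := meas_le_card_mem_le μ (fun k => {ω | colDist (A ω) k ≤ ε})
      (mul_pos hδ.1 (Nat.cast_pos.2 hn))

/-- invertibility via distance of columns to the spans of the other columns. -/
theorem invertibility_via_distance {n : ℕ} {Ω : Type*} [MeasurableSpace Ω]
    (μ : Measure Ω) [IsProbabilityMeasure μ]
    (A : Ω → Matrix (Fin n) (Fin n) ℝ) (hA : Measurable A)
    (δ ρ : ℝ) (hδ : δ ∈ Set.Ioo (0:ℝ) 1) (hρ : ρ ∈ Set.Ioo (0:ℝ) 1)
    (ε : ℝ) (hε : 0 ≤ ε) :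
    μ {ω | ⨅ x : {x : Fin n → ℝ // Incomp δ ρ x},
            ENNReal.ofReal (euclNorm ((A ω).mulVec x)) ≤
          ENNReal.ofReal (ε * ρ / Real.sqrt n)} ≤
      ENNReal.ofReal (1 / (δ * n)) *
        ∑ k : Fin n, μ {ω | Metric.infDist (toE (fun i => A ω i k))
          (Submodule.span ℝ {y : EuclideanSpace ℝ (Fin n) |
            ∃ j : Fin n, j ≠ k ∧ y = toE (fun i => A ω i j)} : Set (EuclideanSpace ℝ (Fin n)))
          ≤ ε} :=
  invertibility_via_distance_general μ A δ ρ hδ hρ ε hε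
end

section
/- Fix δ, ρ ∈ (0,1). There exist γ ∈ (0,1) and λ > 0, depending only on δ and ρ, such that for every N, every v ∈ Incomp_N(δ,ρ), and every α > 0, one has LCD_{α,γ}(v) ≥ λ√N. -/
open MeasureTheory ProbabilityTheory Matrix
open scoped ENNReal

/-! If `0 < θ` and `4θ² ≤ δN`, at most `4θ²` coordinates of a unit vector `v` satisfy
`|θ vᵢ| ≥ 1/2`; when `v` is incompressible the remaining coordinates carry mass more than `ρ²`,
and on them `θ vᵢ` is at least as close to `0` as to any other integer. Hence
`dist(θv, ℤᴺ) > ρθ = ρ‖θv‖`, so with `γ = ρ` no `θ < √(δN)/2` is admissible in the definition of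
the LCD. The admissible set is nonempty, so its infimum is not the junk value `sInf ∅ = 0`:
multiples of a point of the compact torus `(ℝ/ℤ)ᴺ` return arbitrarily close to `0`. -/

open Finset

lemma exists_nsmul_norm_lt {G : Type*} [SeminormedAddCommGroup G] [CompactSpace G] (ξ : G)
    {ε : ℝ} (hε : 0 < ε) : ∃ k : ℕ, 0 < k ∧ ‖k • ξ‖ < ε := by
  obtain ⟨a, -, φ, hφ, hlim⟩ :=
    isCompact_univ.tendsto_subseq (x := fun n : ℕ => n • ξ) fun _ => Set.mem_univ _
  obtain ⟨n, hn⟩ := Metric.cauchySeq_iff'.mp (Filter.Tendsto.cauchySeq hlim) ε hε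
  refine ⟨φ (n + 1) - φ n, Nat.sub_pos_of_lt (hφ n.lt_succ_self), ?_⟩
  rw [sub_nsmul _ (hφ n.lt_succ_self).le, ← sub_eq_add_neg, ← dist_eq_norm]
  exact hn (n + 1) n.le_succ

lemma card_filter_one_le_mul_abs_le {ι : Type*} [Fintype ι] (s : ℝ) (v : ι → ℝ) :
    (#{i | 1 ≤ s * |v i|} : ℝ) ≤ s ^ 2 * ∑ i, v i ^ 2 := by
  calc (#{i | 1 ≤ s * |v i|} : ℝ) = #{i | 1 ≤ s * |v i|} • (1 : ℝ) := by simp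
    _ ≤ ∑ i ∈ {i | 1 ≤ s * |v i|}, (s * |v i|) ^ 2 :=
        card_nsmul_le_sum _ _ _ fun i hi => one_le_pow₀ (mem_filter.mp hi).2
    _ ≤ ∑ i, (s * |v i|) ^ 2 :=
        sum_le_sum_of_subset_of_nonneg (subset_univ _) fun _ _ _ => sq_nonneg _
    _ = s ^ 2 * ∑ i, v i ^ 2 := by simp only [mul_pow, sq_abs, mul_sum]

lemma abs_le_abs_sub_intCast {x : ℝ} (hx : |x| < 1 / 2) (z : ℤ) : |x| ≤ |x - z| := by
  have hround : round x = 0 :=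
    round_eq_zero_iff.mpr ⟨by linarith [neg_abs_le x], (le_abs_self x).trans_lt hx⟩
  simpa [hround] using round_le x z

section

variable {N : ℕ}

lemma euclNorm_sq (v : Fin N → ℝ) : euclNorm v ^ 2 = ∑ i, v i ^ 2 :=
  Real.sq_sqrt (by positivity)

lemma euclNorm_smul (c : ℝ) (v : Fin N → ℝ) : euclNorm (c • v) = |c| * euclNorm v := by
  simp only [euclNorm, Pi.smul_apply, smul_eq_mul, mul_pow, ← mul_sum]
  rw [Real.sqrt_mul (sq_nonneg c), Real.sqrt_sq_eq_abs]

lemma euclNorm_lt_of_forall_abs_lt (hN : 0 < N) {v : Fin N → ℝ} {ε : ℝ}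
    (hv : ∀ i, |v i| < ε) : euclNorm v < Real.sqrt N * ε := by
  have hε : 0 < ε := (abs_nonneg _).trans_lt (hv ⟨0, hN⟩)
  rw [← Real.sqrt_sq hε.le, ← Real.sqrt_mul (Nat.cast_nonneg N), euclNorm]
  refine Real.sqrt_lt_sqrt (by positivity) ?_
  calc ∑ i, v i ^ 2 < ∑ _i : Fin N, ε ^ 2 :=
        sum_lt_sum_of_nonempty ⟨⟨0, hN⟩, mem_univ _⟩ fun i _ => by
          simpa only [sq_abs] using pow_lt_pow_left₀ (hv i) (abs_nonneg _) two_ne_zero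
    _ = N * ε ^ 2 := by simp

lemma exists_nat_euclNorm_smul_sub_intCast_lt (v : Fin N → ℝ) {ε : ℝ} (hε : 0 < ε) :
    ∃ k : ℕ, 0 < k ∧ ∃ p : Fin N → ℤ, euclNorm ((k : ℝ) • v - fun i => (p i : ℝ)) < ε := by
  rcases N.eq_zero_or_pos with rfl | hN
  · exact ⟨1, one_pos, 0, by simpa [euclNorm] using hε⟩
  obtain ⟨k, hk, hkv⟩ := exists_nsmul_norm_lt (fun i => (v i : UnitAddCircle))
    (div_pos hε (Real.sqrt_pos.mpr (Nat.cast_pos.mpr hN)))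
  refine ⟨k, hk, fun i => round (k * v i), ?_⟩
  refine (euclNorm_lt_of_forall_abs_lt hN fun i => ?_).trans_eq (mul_div_cancel₀ _ ?_)
  · have := (norm_le_pi_norm (k • fun i => (v i : UnitAddCircle)) i).trans_lt hkv
    simpa [← UnitAddCircle.norm_eq, nsmul_eq_mul] using this
  · exact (Real.sqrt_pos.mpr (Nat.cast_pos.mpr hN)).ne'

lemma Incomp.sq_lt_sum_compl {δ ρ : ℝ} {v : Fin N → ℝ} (hv : Incomp δ ρ v)
    (hρ : 0 ≤ ρ) {A : Finset (Fin N)} (hA : (#A : ℝ) ≤ δ * N) : ρ ^ 2 < ∑ i ∈ Aᶜ, v i ^ 2 := by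
  by_contra! hle
  refine hv.2 ⟨hv.1, fun i => if i ∈ A then v i else 0, ?_, ?_⟩
  · refine le_trans (Nat.cast_le.mpr (card_le_card fun i hi => ?_)) hA
    by_contra hiA
    exact (mem_filter.mp hi).2 (if_neg hiA)
  · have hsq : ∑ i, (v - fun i => if i ∈ A then v i else 0) i ^ 2 = ∑ i ∈ Aᶜ, v i ^ 2 := by
      rw [← sum_add_sum_compl A, sum_eq_zero fun i hi => by simp [hi], zero_add]
      exact sum_congr rfl fun i hi => by simp [mem_compl.mp hi]
    rw [euclNorm, hsq, ← Real.sqrt_sq hρ]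
    exact Real.sqrt_le_sqrt hle

lemma Incomp.mul_lt_euclNorm_smul_sub_intCast {δ ρ θ : ℝ} {v : Fin N → ℝ}
    (hv : Incomp δ ρ v) (hρ : 0 ≤ ρ) (hθ : 0 < θ) (hθN : 4 * θ ^ 2 ≤ δ * N) (p : Fin N → ℤ) :
    ρ * θ < euclNorm (θ • v - fun i => (p i : ℝ)) := by
  set A : Finset (Fin N) := {i | 1 ≤ 2 * θ * |v i|}
  have hA : (#A : ℝ) ≤ δ * N := by
    have := card_filter_one_le_mul_abs_le (2 * θ) v
    rw [← euclNorm_sq, hv.1] at this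
    linarith
  have hsmall : ∀ i ∈ Aᶜ, |θ * v i| < 1 / 2 := fun i hi => by
    rw [abs_mul, abs_of_pos hθ]
    simp only [A, mem_compl, mem_filter, mem_univ, true_and, not_le] at hi
    linarith
  refine lt_of_pow_lt_pow_left₀ 2 (Real.sqrt_nonneg _) ?_
  rw [euclNorm_sq]
  calc (ρ * θ) ^ 2 < θ ^ 2 * ∑ i ∈ Aᶜ, v i ^ 2 := by
        rw [mul_pow, mul_comm]
        exact mul_lt_mul_of_pos_left (hv.sq_lt_sum_compl hρ hA) (by positivity)
    _ = ∑ i ∈ Aᶜ, |θ * v i| ^ 2 := by simp only [mul_sum, sq_abs, mul_pow]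
    _ ≤ ∑ i ∈ Aᶜ, |θ * v i - p i| ^ 2 := sum_le_sum fun i hi =>
        pow_le_pow_left₀ (abs_nonneg _) (abs_le_abs_sub_intCast (hsmall i hi) (p i)) 2
    _ ≤ ∑ i, (θ • v - fun i => (p i : ℝ)) i ^ 2 := by
        simp only [sq_abs, Pi.sub_apply, Pi.smul_apply, smul_eq_mul]
        exact sum_le_sum_of_subset_of_nonneg (subset_univ _) fun _ _ _ => sq_nonneg _

lemma LCD_set_nonempty {α γ : ℝ} (hα : 0 < α) (hγ : 0 < γ) {v : Fin N → ℝ}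
    (hv : euclNorm v = 1) :
    {θ : ℝ | 0 < θ ∧ ∃ p : Fin N → ℤ,
      euclNorm (θ • v - fun i => (p i : ℝ)) < min (γ * euclNorm (θ • v)) α}.Nonempty := by
  obtain ⟨k, hk, p, hp⟩ := exists_nat_euclNorm_smul_sub_intCast_lt v (lt_min hγ hα)
  refine ⟨k, Nat.cast_pos.mpr hk, p, hp.trans_le (min_le_min_right _ ?_)⟩
  rw [euclNorm_smul, hv, Nat.abs_cast, mul_one]
  exact le_mul_of_one_le_right hγ.le (Nat.one_le_cast.mpr hk)

end

/-- lower bound on the LCD of incompressible vectors. -/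
theorem lcd_lower_bound :
    ∀ δ ∈ Set.Ioo (0:ℝ) 1, ∀ ρ ∈ Set.Ioo (0:ℝ) 1,
    ∃ γ ∈ Set.Ioo (0:ℝ) 1, ∃ lam > (0:ℝ),
      ∀ (N : ℕ) (v : Fin N → ℝ), Incomp δ ρ v → ∀ α > (0:ℝ),
        lam * Real.sqrt N ≤ LCD α γ v := by
  rintro δ ⟨hδ, -⟩ ρ hρ
  refine ⟨ρ, hρ, Real.sqrt δ / 2, by positivity, fun N v hv α hα => ?_⟩
  refine le_csInf (LCD_set_nonempty hα hρ.1 hv.1) fun θ ⟨hθ, p, hp⟩ => ?_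
  by_contra! hθN
  have h4 : 4 * θ ^ 2 ≤ δ * N :=
    calc 4 * θ ^ 2 = (2 * θ) ^ 2 := by ring
      _ ≤ (Real.sqrt δ * Real.sqrt N) ^ 2 := pow_le_pow_left₀ (by positivity) (by linarith) 2
      _ = δ * N := by rw [mul_pow, Real.sq_sqrt hδ.le, Real.sq_sqrt N.cast_nonneg]
  have hfar := hv.mul_lt_euclNorm_smul_sub_intCast hρ.1.le hθ h4 p
  rw [euclNorm_smul, hv.1, abs_of_pos hθ, mul_one] at hp
  linarith [min_le_left (ρ * θ) α]
end

section
/- There exists an absolute constant C ≥ 1 such that for every n, every n-dimensional ellipsoid in ℝⁿ with semiaxes of lengths ℓ_1, …, ℓ_n can be covered by at most Cⁿ translates of the right-parallelepiped whose edge in the direction of the i-th semiaxis has width ℓ_i/√n for each i. -/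
open MeasureTheory ProbabilityTheory Matrix
open scoped ENNReal

/-!
Write `x - x₀ = ∑ cᵢ uᵢ` and cut space into the grid of boxes of widths `wᵢ = ℓᵢ/√n`. The box
containing `x` has its corner at the lattice point `k = (⌊cᵢ/wᵢ⌋)ᵢ`, and on the ellipsoid
`∑ (cᵢ/wᵢ)² ≤ n`, so `‖k‖² ≤ 4n`. Comparing the indicator of `{‖k‖² ≤ R}` with
`exp (R - ‖k‖²)` bounds the number of such lattice points by `eᴿ θⁿ`, where
`θ = ∑_{j ∈ ℤ} exp (-j²)`; with `R = 4n` this is `(e⁴ θ)ⁿ`.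
-/

open Finset

lemma summable_exp_neg_int_sq : Summable fun j : ℤ => Real.exp (-(j : ℝ) ^ 2) := by
  have hnat : Summable fun n : ℕ => Real.exp (-(n : ℝ) ^ 2) :=
    Real.summable_exp_neg_nat.of_nonneg_of_le (fun _ => (Real.exp_pos _).le) fun n => by
      gcongr
      exact_mod_cast Nat.le_self_pow two_ne_zero n
  exact summable_int_iff_summable_nat_and_neg.mpr ⟨by simpa using hnat, by simpa using hnat⟩

variable {ι : Type*} [Fintype ι]

variable {E : Type*} [NormedAddCommGroup E] [InnerProductSpace ℝ E]

lemma OrthonormalBasis.exists_mem_box_at_floor (b : OrthonormalBasis ι ℝ E) {w : ι → ℝ}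
    (hw : ∀ i, 0 < w i) (x₀ x : E) :
    ∃ t : ι → ℝ, (∀ i, 0 ≤ t i ∧ t i ≤ w i) ∧
      x = (x₀ + ∑ i, ((⌊inner ℝ (x - x₀) (b i) / w i⌋ : ℝ) * w i) • b i) + ∑ i, t i • b i := by
  set c : ι → ℝ := fun i => inner ℝ (x - x₀) (b i)
  refine ⟨fun i => c i - ⌊c i / w i⌋ * w i, fun i => ⟨?_, ?_⟩, ?_⟩
  · simpa [le_div_iff₀ (hw i)] using Int.floor_le (c i / w i)
  · have := Int.lt_floor_add_one (c i / w i)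
    rw [div_lt_iff₀ (hw i)] at this
    linarith
  · have hc : ∑ i, c i • b i = x - x₀ := by
      simpa only [c, real_inner_comm] using b.sum_repr' (x - x₀)
    rw [add_assoc, ← sum_add_distrib]
    nth_rewrite 1 [← add_sub_cancel x₀ x, ← hc]
    exact congrArg _ (sum_congr rfl fun i _ => by rw [← add_smul, add_sub_cancel])

noncomputable def latticeBall (ι : Type*) [Fintype ι] [DecidableEq ι] (R : ℕ) : Finset (ι → ℤ) :=
  (Fintype.piFinset fun _ => Icc (-(R : ℤ)) R).filter fun k => ∑ i, k i ^ 2 ≤ R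

variable [DecidableEq ι]

lemma mem_latticeBall {R : ℕ} {k : ι → ℤ} : k ∈ latticeBall ι R ↔ ∑ i, k i ^ 2 ≤ R := by
  refine ⟨fun hk => (mem_filter.mp hk).2, fun hk => mem_filter.mpr ⟨?_, hk⟩⟩
  refine Fintype.mem_piFinset.mpr fun i => mem_Icc.mpr (abs_le.mp ?_)
  calc |k i| ≤ k i ^ 2 := Int.natCast_natAbs (k i) ▸ Int.natAbs_le_self_sq (k i)
    _ ≤ ∑ j, k j ^ 2 := single_le_sum (fun j _ => sq_nonneg (k j)) (mem_univ i)
    _ ≤ R := hk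

lemma card_latticeBall_le (R : ℕ) :
    ((latticeBall ι R).card : ℝ) ≤
      Real.exp R * (∑' j : ℤ, Real.exp (-(j : ℝ) ^ 2)) ^ Fintype.card ι := by
  set f : ℤ → ℝ := fun j => Real.exp (-(j : ℝ) ^ 2)
  calc ((latticeBall ι R).card : ℝ)
      ≤ ∑ k ∈ latticeBall ι R, Real.exp R * ∏ i, f (k i) := by
        rw [card_eq_sum_ones, Nat.cast_sum]
        refine sum_le_sum fun k hk => ?_
        have hkR : ∑ i, ((k i : ℝ)) ^ 2 ≤ R := by exact_mod_cast mem_latticeBall.mp hk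
        rw [← Real.exp_sum, ← Real.exp_add, sum_neg_distrib, Nat.cast_one]
        exact Real.one_le_exp (by linarith)
    _ ≤ ∑ k ∈ Fintype.piFinset fun _ => Icc (-(R : ℤ)) R, Real.exp R * ∏ i, f (k i) :=
        sum_le_sum_of_subset_of_nonneg (filter_subset _ _) fun _ _ _ => by positivity
    _ = Real.exp R * (∑ j ∈ Icc (-(R : ℤ)) R, f j) ^ Fintype.card ι := by
        rw [← mul_sum, sum_prod_piFinset, prod_const, card_univ]
    _ ≤ Real.exp R * (∑' j, f j) ^ Fintype.card ι := by
        gcongr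
        exact summable_exp_neg_int_sq.sum_le_tsum _ fun _ _ => (Real.exp_pos _).le

lemma sq_floor_le (z : ℝ) : (⌊z⌋ : ℝ) ^ 2 ≤ 2 * z ^ 2 + 2 := by
  have h₀ := Int.floor_le z
  have h₁ := Int.sub_one_lt_floor z
  nlinarith [sq_nonneg (z + (z - ⌊z⌋))]

lemma floor_mem_latticeBall {R : ℕ} {z : ι → ℝ} (hz : ∑ i, z i ^ 2 ≤ R) :
    (fun i => ⌊z i⌋) ∈ latticeBall ι (2 * R + 2 * Fintype.card ι) := by
  rw [mem_latticeBall]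
  have : (∑ i, ⌊z i⌋ ^ 2 : ℤ) ≤ (2 * R + 2 * Fintype.card ι : ℝ) :=
    calc (∑ i, ⌊z i⌋ ^ 2 : ℤ) = ∑ i, (⌊z i⌋ : ℝ) ^ 2 := by push_cast; rfl
      _ ≤ ∑ i, (2 * z i ^ 2 + 2) := sum_le_sum fun i _ => sq_floor_le (z i)
      _ ≤ 2 * R + 2 * Fintype.card ι := by
        rw [sum_add_distrib, ← mul_sum, sum_const, card_univ]
        simp only [nsmul_eq_mul]
        linarith
  exact_mod_cast this

/-- any ellipsoid with semiaxes `ℓᵢ` can be covered by at most `Cⁿ` translates of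
the box with widths `ℓᵢ/√n` along the semiaxes. -/
theorem ellipsoid_covering :
    ∃ C ≥ (1:ℝ), ∀ (n : ℕ) (u : Fin n → EuclideanSpace ℝ (Fin n)), Orthonormal ℝ u →
      ∀ ℓ : Fin n → ℝ, (∀ i, 0 < ℓ i) → ∀ x₀ : EuclideanSpace ℝ (Fin n),
      ∃ T : Finset (EuclideanSpace ℝ (Fin n)), (T.card : ℝ) ≤ C ^ n ∧
        {x : EuclideanSpace ℝ (Fin n) | ∑ i, (inner ℝ (x - x₀) (u i) : ℝ) ^ 2 / ℓ i ^ 2 ≤ 1} ⊆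
          ⋃ y ∈ T, {z : EuclideanSpace ℝ (Fin n) | ∃ t : Fin n → ℝ,
            (∀ i, 0 ≤ t i ∧ t i ≤ ℓ i / Real.sqrt n) ∧ z = y + ∑ i, t i • u i} := by
  classical
  set θ := ∑' j : ℤ, Real.exp (-(j : ℝ) ^ 2)
  have hθ : 1 ≤ θ := by
    simpa using summable_exp_neg_int_sq.le_tsum 0 fun j _ => (Real.exp_pos _).le
  refine ⟨Real.exp 4 * θ, one_le_mul_of_one_le_of_one_le (Real.one_le_exp zero_le_four) hθ,
    fun n u hu ℓ hℓ x₀ => ?_⟩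
  let b := OrthonormalBasis.mk hu
    (hu.linearIndependent.span_eq_top_of_card_eq_finrank' (by simp)).ge
  set w : Fin n → ℝ := fun i => ℓ i / Real.sqrt n
  have hw : ∀ i, 0 < w i := fun i =>
    div_pos (hℓ i) (Real.sqrt_pos.mpr (Nat.cast_pos.mpr i.pos))
  refine ⟨(latticeBall (Fin n) (2 * n + 2 * n)).image
    fun k => x₀ + ∑ i, ((k i : ℝ) * w i) • u i, ?_, fun x hx => ?_⟩
  · calc _ ≤ ((latticeBall (Fin n) (2 * n + 2 * n)).card : ℝ) := mod_cast card_image_le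
      _ ≤ Real.exp (2 * n + 2 * n : ℕ) * θ ^ Fintype.card (Fin n) := card_latticeBall_le _
      _ = (Real.exp 4 * θ) ^ n := by
        rw [Fintype.card_fin, mul_pow, ← Real.exp_nat_mul]
        push_cast
        ring_nf
  obtain ⟨t, ht, hxt⟩ := b.exists_mem_box_at_floor hw x₀ x
  have hz : ∑ i, (inner ℝ (x - x₀) (b i) / w i) ^ 2 ≤ n :=
    calc _ = n * ∑ i, inner ℝ (x - x₀) (u i) ^ 2 / ℓ i ^ 2 := by
          rw [mul_sum]
          refine sum_congr rfl fun i _ => ?_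
          rw [OrthonormalBasis.coe_mk, div_div_eq_mul_div, div_pow, mul_pow,
            Real.sq_sqrt n.cast_nonneg]
          ring
      _ ≤ n := mul_le_of_le_one_right n.cast_nonneg hx
  have hk := floor_mem_latticeBall hz
  rw [Fintype.card_fin] at hk
  refine Set.mem_iUnion₂.mpr ⟨_, mem_image_of_mem _ hk, t, ht, ?_⟩
  simpa only [b, OrthonormalBasis.coe_mk] using hxt
end

section
/- There exists an absolute constant C ≥ 1 such that for every n and every right-parallelepiped in ℝⁿ (not necessarily axis-aligned or centered at a lattice point) with edge lengths ℓ_1, …, ℓ_n all at least 1, the number of points of ℤⁿ contained in the parallelepiped is at most Cⁿ · Π_{i=1}^{n} ℓ_i. -/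
open MeasureTheory ProbabilityTheory Matrix
open scoped ENNReal

/-!
Write each lattice point of the box as `x₀ + ∑ tᵢ uᵢ` and sort the points by the cell
`(⌊tᵢ + ℓᵢ / 2⌋₊)ᵢ` containing them; there are `∏ (⌊ℓᵢ⌋₊ + 1) ≤ 2ⁿ ∏ ℓᵢ` cells. Two lattice points
in one cell are at Euclidean distance at most `√n`, so their difference `d ∈ ℤⁿ` satisfies
`∑ |dᵢ| ≤ ∑ dᵢ² ≤ n`. Giving each such `d` the weight `2 ^ (n - ∑ |dᵢ|) ≥ 1` shows that there are
at most `2ⁿ (∑_{k ∈ ℤ} 2^{-|k|})ⁿ ≤ 8ⁿ` of them, so `C = 16` works.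
-/

open Finset

lemma sum_Icc_half_pow_natAbs_le (N : ℕ) :
    ∑ k ∈ Icc (-(N : ℤ)) N, (1 / 2 : ℝ) ^ k.natAbs ≤ 4 := by
  have hmaps : ∀ k ∈ Icc (-(N : ℤ)) N, k.natAbs ∈ range (N + 1) := by
    intro k hk
    rw [mem_Icc] at hk
    rw [mem_range]
    omega
  have hfiber : ∀ j : ℕ, #{k ∈ Icc (-(N : ℤ)) N | k.natAbs = j} ≤ 2 := fun j =>
    calc _ ≤ #({(j : ℤ), -(j : ℤ)} : Finset ℤ) := card_le_card fun k hk => by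
            simp only [mem_filter] at hk
            simp only [mem_insert, mem_singleton]
            omega
      _ ≤ 2 := card_le_two
  rw [← sum_fiberwise_of_maps_to hmaps]
  calc ∑ j ∈ range (N + 1), ∑ k ∈ Icc (-(N : ℤ)) N with k.natAbs = j, (1 / 2 : ℝ) ^ k.natAbs
      = ∑ j ∈ range (N + 1), #{k ∈ Icc (-(N : ℤ)) N | k.natAbs = j} * (1 / 2 : ℝ) ^ j := by
        refine sum_congr rfl fun j _ => ?_
        rw [sum_congr rfl fun k hk => by rw [(mem_filter.1 hk).2], sum_const, nsmul_eq_mul]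
    _ ≤ ∑ j ∈ range (N + 1), 2 * (1 / 2 : ℝ) ^ j := by
        gcongr with j
        exact_mod_cast hfiber j
    _ ≤ 4 := by
        rw [← mul_sum]
        linarith [sum_geometric_two_le (N + 1)]

lemma card_le_of_sum_natAbs_le {n : ℕ} (D : Finset (Fin n → ℤ))
    (hD : ∀ d ∈ D, ∑ i, (d i).natAbs ≤ n) : #D ≤ 8 ^ n := by
  have hbox : D ⊆ Fintype.piFinset fun _ => Icc (-(n : ℤ)) n := fun d hd =>
    Fintype.mem_piFinset.2 fun i => by
      have := (single_le_sum (fun j _ => Nat.zero_le (d j).natAbs) (mem_univ i)).trans (hD d hd)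
      rw [mem_Icc]
      omega
  have hweight : ∀ d ∈ D, (1 : ℝ) ≤ 2 ^ n * ∏ i, (1 / 2 : ℝ) ^ (d i).natAbs := by
    intro d hd
    rw [prod_pow_eq_pow_sum, _root_.one_div_pow, mul_one_div, one_le_div (by positivity)]
    exact pow_le_pow_right₀ one_le_two (hD d hd)
  have : (#D : ℝ) ≤ 8 ^ n :=
    calc (#D : ℝ) = ∑ _d ∈ D, 1 := by simp
      _ ≤ ∑ d ∈ D, 2 ^ n * ∏ i, (1 / 2 : ℝ) ^ (d i).natAbs := sum_le_sum hweight
      _ ≤ ∑ d ∈ Fintype.piFinset fun _ => Icc (-(n : ℤ)) n,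
            2 ^ n * ∏ i, (1 / 2 : ℝ) ^ (d i).natAbs :=
          sum_le_sum_of_subset_of_nonneg hbox fun _ _ _ => by positivity
      _ = 2 ^ n * ∏ _i : Fin n, ∑ k ∈ Icc (-(n : ℤ)) n, (1 / 2 : ℝ) ^ k.natAbs := by
          rw [← mul_sum]
          congr 1
          exact sum_prod_piFinset _ fun _ (k : ℤ) => (1 / 2 : ℝ) ^ k.natAbs
      _ ≤ 2 ^ n * ∏ _i : Fin n, (4 : ℝ) := by
          gcongr with i
          exact sum_Icc_half_pow_natAbs_le n
      _ = 8 ^ n := by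
          rw [prod_const, card_univ, Fintype.card_fin, ← mul_pow]
          norm_num
  exact_mod_cast this

lemma card_le_of_sum_natAbs_sub_le {n : ℕ} (T : Finset (Fin n → ℤ))
    (hT : ∀ p ∈ T, ∀ q ∈ T, ∑ i, (p i - q i).natAbs ≤ n) : #T ≤ 8 ^ n := by
  rcases T.eq_empty_or_nonempty with rfl | ⟨q, hq⟩
  · simp
  rw [← card_image_of_injective T (sub_left_injective (b := q))]
  refine card_le_of_sum_natAbs_le _ ?_
  intro d hd
  obtain ⟨p, hp, rfl⟩ := mem_image.1 hd
  exact hT p hp q hq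

lemma Orthonormal.norm_sum_smul_sq {ι E : Type*} [Fintype ι] [NormedAddCommGroup E]
    [InnerProductSpace ℝ E] {u : ι → E} (hu : Orthonormal ℝ u) (t : ι → ℝ) :
    ‖∑ i, t i • u i‖ ^ 2 = ∑ i, t i ^ 2 := by
  rw [← real_inner_self_eq_norm_sq, hu.inner_sum]
  simp [sq]

lemma norm_toE_sq {m : ℕ} (v : Fin m → ℝ) : ‖toE v‖ ^ 2 = ∑ i, v i ^ 2 := by
  simp [toE, EuclideanSpace.real_norm_sq_eq]

lemma sum_sq_sub_eq_of_eq_add_sum {n : ℕ} {u : Fin n → EuclideanSpace ℝ (Fin n)}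
    (hu : Orthonormal ℝ u) {x₀ : EuclideanSpace ℝ (Fin n)} {p q t s : Fin n → ℝ}
    (hp : toE p = x₀ + ∑ i, t i • u i) (hq : toE q = x₀ + ∑ i, s i • u i) :
    ∑ i, (p i - q i) ^ 2 = ∑ i, (t i - s i) ^ 2 := by
  have hdiff : toE (p - q) = ∑ i, (t i - s i) • u i := by
    rw [show toE (p - q) = toE p - toE q from rfl, hp, hq]
    simp [sub_smul, sum_sub_distrib]
  calc ∑ i, (p i - q i) ^ 2 = ‖toE (p - q)‖ ^ 2 := (norm_toE_sq _).symm
    _ = ∑ i, (t i - s i) ^ 2 := by rw [hdiff, hu.norm_sum_smul_sq]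

lemma sum_natAbs_sub_le_of_abs_sub_le {n : ℕ} {u : Fin n → EuclideanSpace ℝ (Fin n)}
    (hu : Orthonormal ℝ u) {x₀ : EuclideanSpace ℝ (Fin n)} {p q : Fin n → ℤ} {t s : Fin n → ℝ}
    (hp : toE (fun i => (p i : ℝ)) = x₀ + ∑ i, t i • u i)
    (hq : toE (fun i => (q i : ℝ)) = x₀ + ∑ i, s i • u i) (hts : ∀ i, |t i - s i| ≤ 1) :
    ∑ i, (p i - q i).natAbs ≤ n := by
  have hsq : ∑ i, ((p i - q i : ℤ) : ℝ) ^ 2 ≤ n :=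
    calc ∑ i, ((p i - q i : ℤ) : ℝ) ^ 2 = ∑ i, (t i - s i) ^ 2 := by
          push_cast
          exact sum_sq_sub_eq_of_eq_add_sum hu hp hq
      _ ≤ ∑ _i : Fin n, 1 := sum_le_sum fun i _ => by
          rw [← sq_abs]
          exact pow_le_one₀ (abs_nonneg _) (hts i)
      _ = n := by simp
  have habs : ∀ i, |((p i - q i : ℤ) : ℝ)| ≤ ((p i - q i : ℤ) : ℝ) ^ 2 := fun i => by
    have := Int.natAbs_le_self_sq (p i - q i)
    rw [Int.natCast_natAbs] at this
    exact_mod_cast this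
  have : ((∑ i, (p i - q i).natAbs : ℕ) : ℝ) ≤ n := by
    rw [Nat.cast_sum]
    simp only [Nat.cast_natAbs, Int.cast_abs]
    exact (sum_le_sum fun i _ => habs i).trans hsq
  exact_mod_cast this

lemma abs_sub_lt_one_of_natFloor_eq {a b : ℝ} (ha : 0 ≤ a) (hb : 0 ≤ b) (h : ⌊a⌋₊ = ⌊b⌋₊) :
    |a - b| < 1 := by
  have ha₁ := Nat.floor_le ha
  have ha₂ := Nat.lt_floor_add_one a
  have hb₁ := Nat.floor_le hb
  have hb₂ := Nat.lt_floor_add_one b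
  rw [h] at ha₁ ha₂
  rw [abs_sub_lt_iff]
  constructor <;> linarith

/-- the number of integer points in a right-parallelepiped with edge lengths
`ℓᵢ ≥ 1` is at most `Cⁿ ∏ ℓᵢ`. -/
theorem lattice_points_in_box :
    ∃ C ≥ (1:ℝ), ∀ (n : ℕ) (u : Fin n → EuclideanSpace ℝ (Fin n)), Orthonormal ℝ u →
      ∀ ℓ : Fin n → ℝ, (∀ i, 1 ≤ ℓ i) → ∀ x₀ : EuclideanSpace ℝ (Fin n),
      ∀ S : Finset (Fin n → ℤ),
        (∀ p ∈ S, ∃ t : Fin n → ℝ, (∀ i, |t i| ≤ ℓ i / 2) ∧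
          toE (fun i => (p i : ℝ)) = x₀ + ∑ i, t i • u i) →
        (S.card : ℝ) ≤ C ^ n * ∏ i, ℓ i := by
  refine ⟨16, by norm_num, fun n u hu ℓ hℓ x₀ S hS => ?_⟩
  choose! t ht hrep using hS
  have ht_shift : ∀ p ∈ S, ∀ i, 0 ≤ t p i + ℓ i / 2 ∧ t p i + ℓ i / 2 ≤ ℓ i := fun p hp i => by
    have := abs_le.1 (ht p hp i)
    constructor <;> linarith
  let cell : (Fin n → ℤ) → Fin n → ℕ := fun p i => ⌊t p i + ℓ i / 2⌋₊
  have hcell : ∀ p ∈ S, cell p ∈ Fintype.piFinset fun i => range (⌊ℓ i⌋₊ + 1) := fun p hp =>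
    Fintype.mem_piFinset.2 fun i => mem_range.2 <|
      Nat.lt_succ_of_le (Nat.floor_le_floor (ht_shift p hp i).2)
  have hfiber : ∀ c, #{p ∈ S | cell p = c} ≤ 8 ^ n := fun c =>
    card_le_of_sum_natAbs_sub_le _ fun p hp q hq => by
      rw [mem_filter] at hp hq
      refine sum_natAbs_sub_le_of_abs_sub_le hu (hrep p hp.1) (hrep q hq.1) fun i => ?_
      have := abs_sub_lt_one_of_natFloor_eq (ht_shift p hp.1 i).1 (ht_shift q hq.1 i).1
        (congrFun (hp.2.trans hq.2.symm) i)
      rw [add_sub_add_right_eq_sub] at this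
      exact this.le
  have hcard := card_le_mul_card_image_of_maps_to hcell (8 ^ n) fun c _ => hfiber c
  rw [Fintype.card_piFinset] at hcard
  calc (#S : ℝ) ≤ 8 ^ n * ∏ i, ((⌊ℓ i⌋₊ : ℝ) + 1) := by
        simpa using (Nat.cast_le (α := ℝ)).2 hcard
    _ ≤ 8 ^ n * ∏ i, (2 * ℓ i) := by
        gcongr with i
        linarith [Nat.floor_le (zero_le_one.trans (hℓ i)), hℓ i]
    _ = 16 ^ n * ∏ i, ℓ i := by
        rw [prod_mul_distrib, prod_const, card_univ, Fintype.card_fin, ← mul_assoc, ← mul_pow]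
        norm_num
end
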